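/- arXiv:2507.18852 — 2 statements merged into one kernel-verified Lean document; each statement's English description precedes it below -/
import Mathlib

section
/- Let D be a reduced pipe dream and let (i,j), (p,q) be movable cross tiles in D that are southwest-incomparable (i < p and j < q, or p < i and q < j). Then (i,j) is movable in M_{pq}(D) and (p,q) is movable in M_{ij}(D). -/
open Finset

/-- A pipe dream is encoded as a tiling of the (1-indexed) grid:
`true` = cross tile (+), `false` = bump tile (•). -/
abbrev PipeDream := ℕ × ℕ → Bool

namespace PipeDream

/-- All cross tiles lie in the staircase {(i,j) | 1 ≤ i, 1 ≤ j, i+j ≤ n+1}. -/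
def InStaircase (n : ℕ) (D : PipeDream) : Prop :=
  ∀ i j, D (i, j) = true → 1 ≤ i ∧ 1 ≤ j ∧ i + j ≤ n + 1

/-- Reading word: rows top to bottom, within each row right to left; a cross at
(i,j) contributes the simple transposition s_{i+j-1}. -/
def word (n : ℕ) (D : PipeDream) : List ℕ :=
  (List.range n).flatMap (fun i =>
    ((List.range n).reverse.filterMap (fun j =>
      if D (i + 1, j + 1) = true then some (i + j + 1) else none)))

/-- The permutation of ℕ realized by the wires of the pipe dream. -/
def perm (n : ℕ) (D : PipeDream) : Equiv.Perm ℕ :=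
  (List.map (fun k => Equiv.swap k (k + 1)) (word n D)).prod

def crossCount (n : ℕ) (D : PipeDream) : ℕ := (word n D).length

/-- Number of inversions of w among 1..n (the Coxeter length of w ∈ S_n). -/
def invCount (w : Equiv.Perm ℕ) (n : ℕ) : ℕ :=
  (((Finset.Icc 1 n) ×ˢ (Finset.Icc 1 n)).filter
    (fun p => p.1 < p.2 ∧ w p.2 < w p.1)).card

/-- Reduced pipe dreams for w ∈ S_n: crosses in the staircase, wires realize w,
and no two wires cross twice (equivalently, #crosses = ℓ(w)). -/
def RPD (n : ℕ) (w : Equiv.Perm ℕ) : Set PipeDream :=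
  {D | InStaircase n D ∧ perm n D = w ∧ crossCount n D = invCount w n}

/-- (i,j) is a movable cross tile: a cross with a bump above it in column j. -/
def Movable (D : PipeDream) (i j : ℕ) : Prop :=
  D (i, j) = true ∧ ∃ h, 1 ≤ h ∧ h < i ∧ D (h, j) = false

/-- h_{ij}(D): largest h ∈ [1,i-1] with a bump at (h,j). -/
def hIdx (D : PipeDream) (i j : ℕ) : ℕ :=
  ((Finset.Ico 1 i).filter (fun h => D (h, j) = false)).sup id

/-- k_{ij}(D): least k ∈ [j+1,n] with a bump at (i,k). -/
def kIdx (n : ℕ) (D : PipeDream) (i j : ℕ) : ℕ :=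
  WithTop.untopD 0 (((Finset.Icc (j + 1) n).filter (fun k => D (i, k) = false)).min)

/-- Rect_{ij}(D) = [h,i] × [j,k]. -/
def Rect (n : ℕ) (D : PipeDream) (i j : ℕ) : Finset (ℕ × ℕ) :=
  Finset.Icc (hIdx D i j, j) (i, kIdx n D i j)

/-- max_bump_row_{ij}(D): largest p ∈ [h,i) whose row contains a bump tile in Rect. -/
def maxBumpRow (n : ℕ) (D : PipeDream) (i j : ℕ) : ℕ :=
  ((Finset.Ico (hIdx D i j) i).filter
    (fun p => ∃ q ∈ Finset.Icc j (kIdx n D i j), D (p, q) = false)).sup id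

/-- min_bump_col_{ij}(D): least q ∈ (j,k] whose column contains a bump tile in Rect. -/
def minBumpCol (n : ℕ) (D : PipeDream) (i j : ℕ) : ℕ :=
  WithTop.untopD 0
    (((Finset.Icc (j + 1) (kIdx n D i j)).filter
      (fun q => ∃ p ∈ Finset.Icc (hIdx D i j) i, D (p, q) = false)).min)

/-- (i,j) is ladder movable: the bumps of Rect_{ij}(D) are exactly the three
corners (h,j), (h,k), (i,k). -/
def LadderMovable (n : ℕ) (D : PipeDream) (i j : ℕ) : Prop :=
  Movable D i j ∧
    ∀ p q, (p, q) ∈ Rect n D i j →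
      (D (p, q) = false ↔
        ((p, q) = (hIdx D i j, j) ∨ (p, q) = (hIdx D i j, kIdx n D i j) ∨
          (p, q) = (i, kIdx n D i j)))

/-- Generalized ladder move L_{ij}: swap the cross at (i,j) with the bump at (h,k). -/
def ladderMove (n : ℕ) (D : PipeDream) (i j : ℕ) : PipeDream :=
  fun st =>
    if st = (i, j) then false
    else if st = (hIdx D i j, kIdx n D i j) then true
    else D st

/-- One covering step of the ladder-move order on RPD(w). -/
def LadderStep (n : ℕ) (D Q : PipeDream) : Prop :=
  ∃ i j, LadderMovable n D i j ∧ Q = ladderMove n D i j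

/-- D ≤ Q in the ladder-move order (Q is obtained from D by a possibly empty
sequence of generalized ladder moves). -/
def ladderLE (n : ℕ) (D Q : PipeDream) : Prop :=
  Relation.ReflTransGen (LadderStep n) D Q

/-- One ladder-move step performed at a position northeast of (i,j). -/
def LadderStepNE (n i j : ℕ) (D Q : PipeDream) : Prop :=
  ∃ p q, p ≤ i ∧ j ≤ q ∧ LadderMovable n D p q ∧ Q = ladderMove n D p q

/-- V_{ij}(D): pipe dreams reachable from D by ladder moves at positions
northeast of (i,j), having a bump at (i,j). -/
def V (n : ℕ) (D : PipeDream) (i j : ℕ) : Set PipeDream :=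
  {Q | Relation.ReflTransGen (LadderStepNE n i j) D Q ∧ Q (i, j) = false}

/-- Auxiliary construction of Path_{ij}(D), with fuel (the row number strictly
decreases at each step, so fuel `i` always suffices). -/
def pathAux (n : ℕ) (D : PipeDream) (j : ℕ) : ℕ → ℕ × ℕ → Finset (ℕ × ℕ)
  | 0, _ => ∅
  | fuel + 1, (p, q) =>
      let p' := maxBumpRow n D p j
      let q' := WithTop.untopD j
        (((Finset.Icc j n).filter (fun t => D (p', t) = false)).min)
      let seg := ((Finset.Icc p' p).image fun r => (r, q)) ∪
        ((Finset.Icc q' q).image fun t => (p', t))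
      if q' = j then seg else seg ∪ pathAux n D j fuel (p', q')

/-- Path_{ij}(D): the lattice path from (i, k_{ij}(D)) to (h_{ij}(D), j). -/
def Path (n : ℕ) (D : PipeDream) (i j : ℕ) : Finset (ℕ × ℕ) :=
  pathAux n D j i (i, kIdx n D i j)

open scoped Classical in
/-- Shape_{ij}(D): tiles of Rect_{ij}(D) weakly below Path_{ij}(D). -/
noncomputable def Shape (n : ℕ) (D : PipeDream) (i j : ℕ) : Finset (ℕ × ℕ) :=
  (Rect n D i j).filter fun st => ∃ p' ≤ st.1, (p', st.2) ∈ Path n D i j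

/-- The move operation M_{ij} of Definition 3.4, written with fuel:
(i) if max_bump_row = h and min_bump_col = k, apply the ladder move L_{ij};
(ii) if max_bump_row = a > h, recurse as M_{ij} ∘ M_{aj};
(iii) otherwise recurse as M_{ij} ∘ M_{ib} with b = min_bump_col. -/
def moveAux (n : ℕ) : ℕ → PipeDream → ℕ → ℕ → PipeDream
  | 0, D, _, _ => D
  | fuel + 1, D, i, j =>
      if maxBumpRow n D i j = hIdx D i j ∧ minBumpCol n D i j = kIdx n D i j then
        ladderMove n D i j
      else if hIdx D i j < maxBumpRow n D i j then
        moveAux n fuel (moveAux n fuel D (maxBumpRow n D i j) j) i j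
      else
        moveAux n fuel (moveAux n fuel D i (minBumpCol n D i j)) i j

/-- The move operation M_{ij}.  The fuel `(n+2)^(n+2)` vastly exceeds the depth
of the recursion of Definition 3.4, so `move` agrees with M on all inputs for
which the recursion makes sense. -/
def move (n : ℕ) (D : PipeDream) (i j : ℕ) : PipeDream :=
  moveAux n ((n + 2) ^ (n + 2)) D i j

/-- (p,q) is northeast of (i,j). -/
def NorthEastOf (p q i j : ℕ) : Prop := p ≤ i ∧ j ≤ q

/-- (i,j) and (p,q) are southwest-incomparable. -/
def SWIncomparable (i j p q : ℕ) : Prop := (i < p ∧ j < q) ∨ (p < i ∧ q < j)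

/-! ### Auxiliary lemmas for stmt13 -/

/-- Crosses in rows ≥ 1 lie in the staircase (weaker than `InStaircase`,
preserved by the moves performed during `moveAux`). -/
def Sub (n : ℕ) (D : PipeDream) : Prop :=
  ∀ r c : ℕ, 1 ≤ r → D (r, c) = true → r + c ≤ n + 1

lemma hIdx_lt {D : PipeDream} {a b : ℕ} (ha : 1 ≤ a) : hIdx D a b < a := by
  rcases Finset.eq_empty_or_nonempty
      ((Finset.Ico 1 a).filter (fun h => D (h, b) = false)) with he | hne
  · rw [hIdx, he]; simpa using Nat.lt_of_lt_of_le Nat.zero_lt_one ha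
  · obtain ⟨x, hx, heq⟩ := Finset.exists_mem_eq_sup _ hne id
    rw [hIdx, heq]
    exact (Finset.mem_Ico.1 (Finset.mem_filter.1 hx).1).2

lemma hIdx_spec (D : PipeDream) (a b : ℕ) :
    hIdx D a b = 0 ∨ (1 ≤ hIdx D a b ∧ D (hIdx D a b, b) = false) := by
  rcases Finset.eq_empty_or_nonempty
      ((Finset.Ico 1 a).filter (fun h => D (h, b) = false)) with he | hne
  · left; rw [hIdx, he]; rfl
  · right
    obtain ⟨x, hx, heq⟩ := Finset.exists_mem_eq_sup _ hne id
    rw [hIdx, heq]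
    obtain ⟨hx1, hx2⟩ := Finset.mem_filter.1 hx
    exact ⟨(Finset.mem_Ico.1 hx1).1, hx2⟩

lemma kIdx_spec (n : ℕ) (D : PipeDream) (a b : ℕ) :
    kIdx n D a b = 0 ∨
      (b + 1 ≤ kIdx n D a b ∧ kIdx n D a b ≤ n ∧ D (a, kIdx n D a b) = false) := by
  rw [kIdx]
  cases hm : ((Finset.Icc (b + 1) n).filter (fun k => D (a, k) = false)).min with
  | top => left; rfl
  | coe m =>
    right
    have hmem := Finset.mem_of_min hm
    rw [Finset.mem_filter, Finset.mem_Icc] at hmem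
    rw [WithTop.untopD_coe]
    exact ⟨hmem.1.1, hmem.1.2, hmem.2⟩

lemma kIdx_le {n : ℕ} {D : PipeDream} {a b c : ℕ} (hc1 : b + 1 ≤ c) (hc2 : c ≤ n)
    (hf : D (a, c) = false) : 1 ≤ kIdx n D a b ∧ kIdx n D a b ≤ c := by
  have hmem : c ∈ (Finset.Icc (b + 1) n).filter (fun k => D (a, k) = false) := by
    rw [Finset.mem_filter, Finset.mem_Icc]; exact ⟨⟨hc1, hc2⟩, hf⟩
  rw [kIdx]
  cases hm : ((Finset.Icc (b + 1) n).filter (fun k => D (a, k) = false)).min with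
  | top => exact absurd (Finset.min_eq_top.1 hm ▸ hmem) (Finset.notMem_empty c)
  | coe m =>
    have hle := Finset.min_le hmem
    rw [hm] at hle
    have hmm := Finset.mem_of_min hm
    rw [Finset.mem_filter, Finset.mem_Icc] at hmm
    rw [WithTop.untopD_coe]
    exact ⟨le_trans (by omega) hmm.1.1, by exact_mod_cast hle⟩

lemma kIdx_zero {n : ℕ} {D : PipeDream} {a b : ℕ} (h : kIdx n D a b = 0) :
    ∀ c, b + 1 ≤ c → c ≤ n → D (a, c) = true := by
  intro c hc1 hc2
  by_contra hne
  have hf : D (a, c) = false := by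
    cases hDa : D (a, c) with
    | false => rfl
    | true => exact absurd hDa hne
  have := (kIdx_le hc1 hc2 hf).1
  omega

lemma maxBumpRow_lt {n : ℕ} {D : PipeDream} {a b : ℕ} (ha : 1 ≤ a) :
    maxBumpRow n D a b < a := by
  rcases Finset.eq_empty_or_nonempty
      ((Finset.Ico (hIdx D a b) a).filter
        (fun p => ∃ q ∈ Finset.Icc b (kIdx n D a b), D (p, q) = false)) with he | hne
  · rw [maxBumpRow, he]; simpa using Nat.lt_of_lt_of_le Nat.zero_lt_one ha
  · obtain ⟨x, hx, heq⟩ := Finset.exists_mem_eq_sup _ hne id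
    rw [maxBumpRow, heq]
    exact (Finset.mem_Ico.1 (Finset.mem_filter.1 hx).1).2

lemma maxBumpRow_ge {n : ℕ} {D : PipeDream} {a b : ℕ} (ha : 1 ≤ a)
    (hH : 1 ≤ hIdx D a b) (hbK : b ≤ kIdx n D a b) :
    hIdx D a b ≤ maxBumpRow n D a b := by
  have hHb : D (hIdx D a b, b) = false := by
    rcases hIdx_spec D a b with h0 | ⟨_, hf⟩
    · omega
    · exact hf
  have hmem : hIdx D a b ∈ (Finset.Ico (hIdx D a b) a).filter
      (fun p => ∃ q ∈ Finset.Icc b (kIdx n D a b), D (p, q) = false) := by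
    rw [Finset.mem_filter, Finset.mem_Ico]
    exact ⟨⟨le_refl _, hIdx_lt ha⟩, b, Finset.mem_Icc.2 ⟨le_refl _, hbK⟩, hHb⟩
  exact Finset.le_sup (f := id) hmem

lemma maxBumpRow_of_kIdx_zero {n : ℕ} {D : PipeDream} {a b : ℕ} (hb : 1 ≤ b)
    (hk : kIdx n D a b = 0) : maxBumpRow n D a b = 0 := by
  have he : ((Finset.Ico (hIdx D a b) a).filter
      (fun p => ∃ q ∈ Finset.Icc b (kIdx n D a b), D (p, q) = false)) = ∅ := by
    rw [Finset.filter_eq_empty_iff]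
    intro p _
    rintro ⟨q, hq, -⟩
    rw [Finset.mem_Icc] at hq
    omega
  rw [maxBumpRow, he]; rfl

lemma minBumpCol_of_kIdx_zero {n : ℕ} {D : PipeDream} {a b : ℕ}
    (hk : kIdx n D a b = 0) : minBumpCol n D a b = 0 := by
  have he : ((Finset.Icc (b + 1) (kIdx n D a b)).filter
      (fun q => ∃ p ∈ Finset.Icc (hIdx D a b) a, D (p, q) = false)) = ∅ := by
    rw [Finset.filter_eq_empty_iff]
    intro c hc
    rw [Finset.mem_Icc] at hc
    omega
  rw [minBumpCol, he]; rfl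

lemma minBumpCol_le {n : ℕ} {D : PipeDream} {a b c : ℕ} (hc1 : b + 1 ≤ c)
    (hc2 : c ≤ kIdx n D a b) (hw : ∃ p ∈ Finset.Icc (hIdx D a b) a, D (p, c) = false) :
    b + 1 ≤ minBumpCol n D a b ∧ minBumpCol n D a b ≤ c := by
  have hmem : c ∈ (Finset.Icc (b + 1) (kIdx n D a b)).filter
      (fun q => ∃ p ∈ Finset.Icc (hIdx D a b) a, D (p, q) = false) := by
    rw [Finset.mem_filter, Finset.mem_Icc]; exact ⟨⟨hc1, hc2⟩, hw⟩
  rw [minBumpCol]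
  cases hm : ((Finset.Icc (b + 1) (kIdx n D a b)).filter
      (fun q => ∃ p ∈ Finset.Icc (hIdx D a b) a, D (p, q) = false)).min with
  | top => exact absurd (Finset.min_eq_top.1 hm ▸ hmem) (Finset.notMem_empty c)
  | coe m =>
    have hle := Finset.min_le hmem
    rw [hm] at hle
    have hmm := Finset.mem_of_min hm
    rw [Finset.mem_filter, Finset.mem_Icc] at hmm
    rw [WithTop.untopD_coe]
    exact ⟨hmm.1.1, by exact_mod_cast hle⟩

/-- If the invariants hold and `kIdx = 0` then `hIdx = 0`. -/
lemma hIdx_of_kIdx_zero {n : ℕ} {D : PipeDream} {a b : ℕ} (hS : Sub n D)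
    (ha : 1 ≤ a) (hab : a + b ≤ n + 1) (hk : kIdx n D a b = 0) : hIdx D a b = 0 := by
  have ha1 : a = 1 := by
    by_cases hbn : b + 1 ≤ n
    · have := hS a n ha (kIdx_zero hk n hbn le_rfl)
      omega
    · omega
  subst ha1
  have : (Finset.Ico 1 1).filter (fun h => D (h, b) = false) = ∅ := by
    simp
  rw [hIdx, this]; rfl

/-- Under the invariants, `kIdx ≤ n + 2 - a` when `a ≥ 2`. -/
lemma kIdx_add_le {n : ℕ} {D : PipeDream} {a b : ℕ} (hS : Sub n D)
    (ha2 : 2 ≤ a) (hab : a + b ≤ n + 1) : a + kIdx n D a b ≤ n + 2 := by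
  have hf : D (a, n + 2 - a) = false := by
    cases hDa : D (a, n + 2 - a) with
    | false => rfl
    | true =>
      have := hS a (n + 2 - a) (by omega) hDa
      omega
  have := kIdx_le (n := n) (b := b) (by omega) (by omega) hf
  omega

/-- Main technical lemma: under the invariants, `moveAux` preserves `Sub`,
does not change tiles strictly below row `a` nor in columns `[1, b)`, and
preserves the existence of a bump above any row `I > a` in any column. -/
lemma moveAux_main (n : ℕ) : ∀ (fuel : ℕ) (D : PipeDream) (a b : ℕ),
    Sub n D → 1 ≤ a → 1 ≤ b → a + b ≤ n + 1 →
    Sub n (moveAux n fuel D a b) ∧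
    (∀ r c : ℕ, a < r ∨ (1 ≤ c ∧ c < b) → moveAux n fuel D a b (r, c) = D (r, c)) ∧
    (∀ I J : ℕ, a < I → (∃ h, 1 ≤ h ∧ h < I ∧ D (h, J) = false) →
      ∃ h, 1 ≤ h ∧ h < I ∧ moveAux n fuel D a b (h, J) = false) := by
  intro fuel
  induction fuel with
  | zero =>
    intro D a b hS ha hb hab
    exact ⟨hS, fun _ _ _ => rfl, fun I J _ hw => hw⟩
  | succ fuel ih =>
    intro D a b hS ha hb hab
    have hlt : hIdx D a b < a := hIdx_lt ha
    by_cases h1 : maxBumpRow n D a b = hIdx D a b ∧ minBumpCol n D a b = kIdx n D a b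
    · -- case (i): a single ladder move
      have heq : moveAux n (fuel + 1) D a b = ladderMove n D a b := by
        rw [moveAux, if_pos h1]
      rw [heq]
      have hHK : 1 ≤ hIdx D a b → hIdx D a b + kIdx n D a b ≤ n + 1 := by
        intro hH
        have hk0 : kIdx n D a b ≠ 0 := by
          intro h0
          have := hIdx_of_kIdx_zero hS ha hab h0
          omega
        have := kIdx_add_le hS (by omega) hab
        omega
      refine ⟨?_, ?_, ?_⟩
      · -- Sub preserved
        intro r c hr ht
        by_cases e1 : ((r : ℕ), c) = (a, b)
        · rw [ladderMove, if_pos e1] at ht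
          exact absurd ht (by simp)
        by_cases e2 : ((r : ℕ), c) = (hIdx D a b, kIdx n D a b)
        · rw [Prod.mk.injEq] at e2
          obtain ⟨hr', hc'⟩ := e2
          have := hHK (hr' ▸ hr)
          omega
        · rw [ladderMove, if_neg e1, if_neg e2] at ht
          exact hS r c hr ht
      · -- unchanged region
        intro r c hrc
        have e2 : ((r : ℕ), c) ≠ (hIdx D a b, kIdx n D a b) := by
          rw [Ne, Prod.mk.injEq]
          rintro ⟨hr', hc'⟩
          rcases kIdx_spec n D a b with hk0 | ⟨hk1, -, -⟩ <;> omega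
        have e1 : ((r : ℕ), c) ≠ (a, b) := by
          rw [Ne, Prod.mk.injEq]
          rintro ⟨hr', hc'⟩
          omega
        rw [ladderMove, if_neg e1, if_neg e2]
      · -- bump transport
        intro I J haI hw
        obtain ⟨h₀, h01, h0I, h0f⟩ := hw
        by_cases hcase : ((h₀ : ℕ), J) = (hIdx D a b, kIdx n D a b)
        · rw [Prod.mk.injEq] at hcase
          obtain ⟨hr', hc'⟩ := hcase
          have hk0 : kIdx n D a b ≠ 0 := by
            intro h0
            have := hIdx_of_kIdx_zero hS ha hab h0
            omega
          rcases kIdx_spec n D a b with hk | ⟨hkb, hkn, hkf⟩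
          · omega
          refine ⟨a, ha, haI, ?_⟩
          have e1 : ((a : ℕ), J) ≠ (a, b) := by
            rw [Ne, Prod.mk.injEq]
            rintro ⟨-, hc2⟩
            omega
          have e2 : ((a : ℕ), J) ≠ (hIdx D a b, kIdx n D a b) := by
            rw [Ne, Prod.mk.injEq]
            rintro ⟨ha2, -⟩
            omega
          rw [ladderMove, if_neg e1, if_neg e2, hc']
          exact hkf
        · refine ⟨h₀, h01, h0I, ?_⟩
          rw [ladderMove]
          by_cases hab' : ((h₀ : ℕ), J) = (a, b)
          · rw [if_pos hab']
          · rw [if_neg hab', if_neg hcase]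
            exact h0f
    · by_cases h2 : hIdx D a b < maxBumpRow n D a b
      · -- case (ii): recurse upward in the same column
        have heq : moveAux n (fuel + 1) D a b =
            moveAux n fuel (moveAux n fuel D (maxBumpRow n D a b) b) a b := by
          rw [moveAux, if_neg h1, if_pos h2]
        rw [heq]
        have hA1 : 1 ≤ maxBumpRow n D a b := by omega
        have hAa : maxBumpRow n D a b < a := maxBumpRow_lt ha
        obtain ⟨iS, iU, iT⟩ := ih D (maxBumpRow n D a b) b hS hA1 hb (by omega)
        obtain ⟨oS, oU, oT⟩ := ih (moveAux n fuel D (maxBumpRow n D a b) b) a b iS ha hb hab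
        refine ⟨oS, ?_, ?_⟩
        · intro r c hrc
          rw [oU r c hrc]
          exact iU r c (by omega)
        · intro I J haI hw
          exact oT I J haI (iT I J (by omega) hw)
      · -- case (iii): recurse rightward in the same row
        have heq : moveAux n (fuel + 1) D a b =
            moveAux n fuel (moveAux n fuel D a (minBumpCol n D a b)) a b := by
          rw [moveAux, if_neg h1, if_neg h2]
        rw [heq]
        -- kIdx ≠ 0 in this case
        have hk0 : kIdx n D a b ≠ 0 := by
          intro h0
          have hH0 : hIdx D a b = 0 := hIdx_of_kIdx_zero hS ha hab h0
          have hM0 : maxBumpRow n D a b = 0 := maxBumpRow_of_kIdx_zero hb h0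
          have hm0 : minBumpCol n D a b = 0 := minBumpCol_of_kIdx_zero h0
          exact h1 ⟨by omega, by omega⟩
        rcases kIdx_spec n D a b with hk | ⟨hkb, hkn, hkf⟩
        · omega
        have hB : b + 1 ≤ minBumpCol n D a b ∧ minBumpCol n D a b ≤ kIdx n D a b :=
          minBumpCol_le hkb le_rfl ⟨a, Finset.mem_Icc.2 ⟨by omega, le_rfl⟩, hkf⟩
        have hBne : minBumpCol n D a b ≠ kIdx n D a b := by
          intro hBK
          have hMH : maxBumpRow n D a b ≠ hIdx D a b := fun h => h1 ⟨h, hBK⟩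
          have hH1 : 1 ≤ hIdx D a b := by omega
          have := maxBumpRow_ge (n := n) ha hH1 (by omega)
          omega
        have habB : a + minBumpCol n D a b ≤ n + 1 := by
          by_cases ha2 : 2 ≤ a
          · have := kIdx_add_le hS ha2 hab
            omega
          · omega
        obtain ⟨iS, iU, iT⟩ := ih D a (minBumpCol n D a b) hS ha (by omega) habB
        obtain ⟨oS, oU, oT⟩ := ih (moveAux n fuel D a (minBumpCol n D a b)) a b iS ha hb hab
        refine ⟨oS, ?_, ?_⟩
        · intro r c hrc
          rw [oU r c hrc]
          exact iU r c (by omega)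
        · intro I J haI hw
          exact oT I J haI (iT I J haI hw)

end PipeDream

open PipeDream in
/-- for southwest-incomparable movable tiles, each remains
movable after applying the other's move. -/
theorem stmt13 (n : ℕ) (w : Equiv.Perm ℕ) (D : PipeDream) (hD : D ∈ RPD n w)
    (i j p q : ℕ) (h1 : Movable D i j) (h2 : Movable D p q)
    (hsw : SWIncomparable i j p q) :
    Movable (move n D p q) i j ∧ Movable (move n D i j) p q := by
  obtain ⟨hst, -, -⟩ := hD
  have hS : Sub n D := fun r c _ ht => (hst r c ht).2.2
  obtain ⟨wij, ai, ai1, aii, aif⟩ := h1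
  obtain ⟨wpq, ap, ap1, app, apf⟩ := h2
  obtain ⟨i1, j1, ijn⟩ := hst i j wij
  obtain ⟨p1, q1, pqn⟩ := hst p q wpq
  obtain ⟨-, pU, pT⟩ := moveAux_main n ((n + 2) ^ (n + 2)) D p q hS p1 q1 pqn
  obtain ⟨-, iU, iT⟩ := moveAux_main n ((n + 2) ^ (n + 2)) D i j hS i1 j1 ijn
  rcases hsw with ⟨hip, hjq⟩ | ⟨hpi, hqj⟩
  · constructor
    · -- i < p, j < q : column j untouched by the move at (p, q)
      refine ⟨?_, ai, ai1, aii, ?_⟩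
      · rw [move, pU i j (Or.inr ⟨j1, hjq⟩)]; exact wij
      · rw [move, pU ai j (Or.inr ⟨j1, hjq⟩)]; exact aif
    · -- (p, q) is strictly below row i for the move at (i, j)
      constructor
      · rw [move, iU p q (Or.inl hip)]; exact wpq
      · rw [move]; exact iT p q hip ⟨ap, ap1, app, apf⟩
  · constructor
    · -- (i, j) is strictly below row p for the move at (p, q)
      constructor
      · rw [move, pU i j (Or.inl hpi)]; exact wij
      · rw [move]; exact pT i j hpi ⟨ai, ai1, aii, aif⟩
    · -- p < i, q < j : column q untouched by the move at (i, j)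
      refine ⟨?_, ap, ap1, app, ?_⟩
      · rw [move, iU p q (Or.inr ⟨q1, hqj⟩)]; exact wpq
      · rw [move, iU ap q (Or.inr ⟨q1, hqj⟩)]; exact apf
end

section
/- Let D be a reduced pipe dream with movable cross tile (i,j), let h = h_{ij}(D), a = max_bump_row_{ij}(D), k = k_{ij}(D), and suppose a > h. If (p,q) ∈ Shape_{ij}(D) is ladder movable in D with a < p < i, then q = k. Moreover if (i,q) is ladder movable in D with j < q < k, then q ≥ k_{aj}(D). -/
open Finset

namespace PipeDream

/-! ### Generic helpers -/

lemma sup_id_mem (s : Finset ℕ) (h : s.Nonempty) : s.sup id ∈ s := by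
  obtain ⟨b, hb, hs⟩ := Finset.exists_mem_eq_sup s h id
  rw [hs]; exact hb

lemma min_untop'_eq (s : Finset ℕ) (h : s.Nonempty) :
    WithTop.untopD 0 s.min = s.min' h := by
  rw [← Finset.coe_min' h, WithTop.untopD_coe]

/-! ### Products of adjacent transpositions -/

def lprod (L : List ℕ) : Equiv.Perm ℕ := (L.map (fun k => Equiv.swap k (k+1))).prod

lemma lprod_nil : lprod [] = 1 := rfl

lemma lprod_append (L1 L2 : List ℕ) : lprod (L1 ++ L2) = lprod L1 * lprod L2 := by
  simp [lprod]

lemma lprod_cons (t : ℕ) (L : List ℕ) :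
    lprod (t :: L) = Equiv.swap t (t+1) * lprod L := by
  simp [lprod]

lemma lprod_single (t : ℕ) : lprod [t] = Equiv.swap t (t+1) := by
  simp [lprod]

lemma invCount_swap_mul (u : Equiv.Perm ℕ) (t n : ℕ) :
    invCount (Equiv.swap t (t+1) * u) n ≤ invCount u n + 1 := by
  classical
  set s := Equiv.swap t (t+1) with hs
  set e : ℕ × ℕ := if u.symm t < u.symm (t+1) then (u.symm t, u.symm (t+1))
    else (u.symm (t+1), u.symm t) with he
  have hsub : (((Finset.Icc 1 n) ×ˢ (Finset.Icc 1 n)).filter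
      (fun p => p.1 < p.2 ∧ (s * u) p.2 < (s * u) p.1)) ⊆
      (((Finset.Icc 1 n) ×ˢ (Finset.Icc 1 n)).filter
      (fun p => p.1 < p.2 ∧ u p.2 < u p.1)) ∪ {e} := by
    intro p hp
    rw [Finset.mem_filter] at hp
    obtain ⟨hmem, hlt, hval⟩ := hp
    rw [Finset.mem_union]
    by_cases hc : u p.2 < u p.1
    · exact Or.inl (Finset.mem_filter.2 ⟨hmem, hlt, hc⟩)
    · right
      have hne : u p.1 ≠ u p.2 := fun hh => by
        have := u.injective hh; omega
      have h12 : u p.1 < u p.2 := by omega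
      have hx : u p.1 = t ∧ u p.2 = t + 1 := by
        simp only [hs, Equiv.Perm.mul_apply, Equiv.swap_apply_def] at hval
        split_ifs at hval <;> omega
      have h1 : p.1 = u.symm t := by rw [← hx.1]; simp
      have h2 : p.2 = u.symm (t+1) := by rw [← hx.2]; simp
      have : e = p := by
        rw [he]; rw [← h1, ← h2]
        rw [if_pos (by omega)]
      simp [← this]
  calc _ ≤ _ := Finset.card_le_card hsub
    _ ≤ _ + ({e} : Finset (ℕ × ℕ)).card := Finset.card_union_le _ _
    _ = _ + 1 := by simp [invCount]

lemma invCount_lprod_le (L : List ℕ) (n : ℕ) : invCount (lprod L) n ≤ L.length := by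
  induction L with
  | nil =>
    simp only [lprod_nil, invCount, List.length_nil, Nat.le_zero, Finset.card_eq_zero,
      Finset.filter_eq_empty_iff]
    refine Finset.filter_eq_empty_iff.2 ?_; intro p _
    simp only [Equiv.Perm.one_apply]
    omega
  | cons t L ih =>
    rw [lprod_cons]
    calc invCount (Equiv.swap t (t+1) * lprod L) n ≤ invCount (lprod L) n + 1 :=
        invCount_swap_mul _ _ _
      _ ≤ L.length + 1 := by omega
      _ = (t :: L).length := by simp

/-! ### Row segments -/

/-- Row segment: letters of row `r`, columns `lo..lo+len-1`, read right-to-left. -/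
def seg (D : PipeDream) (r lo len : ℕ) : List ℕ :=
  ((List.range' lo len).reverse).filterMap
    (fun c => if D (r, c) = true then some (r + c - 1) else none)

lemma range'_split (s l1 l2 : ℕ) :
    List.range' s (l1 + l2) = List.range' s l1 ++ List.range' (s + l1) l2 := by
  rw [Nat.add_comm l1 l2]
  rw [Nat.add_comm l2 l1, ← List.range'_append (s := s) (m := l1) (n := l2) (step := 1)]
  simp

lemma seg_split (D : PipeDream) (r lo l1 l2 : ℕ) :
    seg D r lo (l1 + l2) = seg D r (lo + l1) l2 ++ seg D r lo l1 := by
  unfold seg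
  rw [range'_split, List.reverse_append, List.filterMap_append]

lemma seg_one (D : PipeDream) (r c : ℕ) :
    seg D r c 1 = if D (r, c) = true then [r + c - 1] else [] := by
  by_cases h : D (r, c) = true <;> simp [seg, h]

lemma seg_congr {D D' : PipeDream} {r lo len : ℕ}
    (h : ∀ c, lo ≤ c → c < lo + len → D (r, c) = D' (r, c)) :
    seg D r lo len = seg D' r lo len := by
  unfold seg
  apply List.filterMap_congr
  intro c hc
  rw [List.mem_reverse, List.mem_range'_1] at hc
  rw [h c hc.1 hc.2]

lemma seg_mem {D : PipeDream} {r lo len ℓ : ℕ} (h : ℓ ∈ seg D r lo len) :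
    ∃ c, lo ≤ c ∧ c < lo + len ∧ ℓ = r + c - 1 ∧ D (r, c) = true := by
  unfold seg at h
  rw [List.mem_filterMap] at h
  obtain ⟨c, hc, hc2⟩ := h
  rw [List.mem_reverse, List.mem_range'_1] at hc
  by_cases hD : D (r, c) = true
  · rw [if_pos hD] at hc2
    exact ⟨c, hc.1, hc.2, (Option.some_injective _ hc2).symm, hD⟩
  · rw [if_neg hD] at hc2
    simp at hc2

lemma lprod_fix {L : List ℕ} {v : ℕ} (h : ∀ ℓ ∈ L, ℓ ≠ v ∧ ℓ + 1 ≠ v) :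
    lprod L v = v := by
  induction L with
  | nil => simp [lprod_nil]
  | cons t L ih =>
    rw [lprod_cons]
    have ht := h t (by simp)
    have hL : lprod L v = v := ih fun ℓ hℓ => h ℓ (by simp [hℓ])
    simp only [Equiv.Perm.mul_apply, hL]
    exact Equiv.swap_apply_of_ne_of_ne (by omega) (by omega)

lemma seg_fix {D : PipeDream} {r lo len v : ℕ}
    (h : ∀ c, lo ≤ c → c < lo + len → D (r, c) = true → r + c - 1 ≠ v ∧ r + c ≠ v)
    (hr : 1 ≤ r) :
    lprod (seg D r lo len) v = v := by
  apply lprod_fix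
  intro ℓ hℓ
  obtain ⟨c, h1, h2, h3, h4⟩ := seg_mem hℓ
  have := h c h1 h2 h4
  omega

/-- Action of a contiguous all-cross run. -/
lemma seg_run (D : PipeDream) (r lo len : ℕ) (hr : 1 ≤ r) (hlo : 1 ≤ lo)
    (hfull : ∀ c, lo ≤ c → c < lo + len → D (r, c) = true) :
    lprod (seg D r lo len) (r + lo - 1) = r + lo + len - 1 ∧
    (∀ v, r + lo - 1 < v → v ≤ r + lo + len - 1 → lprod (seg D r lo len) v = v - 1) := by
  induction len with
  | zero =>
    constructor
    · simp [seg, lprod_nil]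
    · intro v h1 h2; omega
  | succ len ih =>
    have hfull' : ∀ c, lo ≤ c → c < lo + len → D (r, c) = true :=
      fun c h1 h2 => hfull c h1 (by omega)
    obtain ⟨ihl, ihm⟩ := ih hfull'
    have hsplit : seg D r lo (len + 1) = (r + (lo + len) - 1) :: seg D r lo len := by
      rw [seg_split D r lo len 1, seg_one, if_pos (hfull _ (by omega) (by omega))]
      simp
    rw [hsplit, lprod_cons]
    constructor
    · simp only [Equiv.Perm.mul_apply, ihl, Equiv.swap_apply_def]
      split_ifs <;> omega
    · intro v h1 h2
      by_cases hv : v ≤ r + lo + len - 1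
      · have hm := ihm v h1 hv
        simp only [Equiv.Perm.mul_apply, hm, Equiv.swap_apply_def]
        split_ifs <;> omega
      · have hfix : lprod (seg D r lo len) v = v :=
          seg_fix (fun c hc1 hc2 _ => by omega) hr
        simp only [Equiv.Perm.mul_apply, hfix, Equiv.swap_apply_def]
        split_ifs <;> omega

lemma flatMap_congr {α β : Type*} {l : List α} {f g : α → List β}
    (h : ∀ x ∈ l, f x = g x) : l.flatMap f = l.flatMap g := by
  induction l with
  | nil => rfl
  | cons a l ih =>
    simp only [List.flatMap_cons, h a (by simp), ih fun x hx => h x (by simp [hx])]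

lemma word_eq (n : ℕ) (D : PipeDream) :
    word n D = (List.range n).flatMap (fun i0 => seg D (i0 + 1) 1 n) := by
  unfold word
  apply flatMap_congr
  intro i0 _
  unfold seg
  rw [List.range'_eq_map_range, ← List.map_reverse, List.filterMap_map]
  apply List.filterMap_congr
  intro j _
  simp only [Function.comp_apply]
  have h1 : 1 + j = j + 1 := by omega
  rw [h1]
  by_cases hD : D (i0 + 1, j + 1) = true
  · rw [if_pos hD, if_pos hD]
    have : i0 + 1 + (j + 1) - 1 = i0 + j + 1 := by omega
    rw [this]
  · rw [if_neg hD, if_neg hD]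

lemma perm_eq_lprod (n : ℕ) (D : PipeDream) : perm n D = lprod (word n D) := rfl

/-- Splitting a full row at columns `Q` and `K`. -/
lemma seg_split4 (D : PipeDream) (r Q K n : ℕ) (h1Q : 1 ≤ Q) (hQK : Q < K) (hKn : K ≤ n) :
    seg D r 1 n = seg D r (K+1) (n-K) ++ seg D r K 1 ++ seg D r (Q+1) (K-1-Q) ++
      seg D r Q 1 ++ seg D r 1 (Q-1) := by
  have e0 : n = (Q-1) + (1 + ((K-1-Q) + (1 + (n-K)))) := by omega
  nth_rewrite 1 [e0]
  rw [seg_split]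
  rw [show 1 + (Q-1) = Q from by omega]
  rw [seg_split]
  rw [seg_split]
  rw [show Q + 1 + (K-1-Q) = K from by omega]
  rw [seg_split]

/-- Action of the product of full middle rows (all crosses on `[Q,K]`). -/
lemma mid_action (n : ℕ) (D : PipeDream) (Q K : ℕ) (h1Q : 1 ≤ Q) (hQK : Q < K) (hKn : K ≤ n)
    (len : ℕ) :
    ∀ s, 1 ≤ s →
    (∀ r c, s < r → r ≤ s + len → Q ≤ c → c ≤ K → D (r, c) = true) →
    lprod ((List.range' s len).flatMap (fun i0 => seg D (i0 + 1) 1 n)) (s + len + Q) = s + Q ∧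
    lprod ((List.range' s len).flatMap (fun i0 => seg D (i0 + 1) 1 n)) (s + len + K) = s + K := by
  induction len with
  | zero =>
    intro s _ _
    simp [lprod_nil]
  | succ len ih =>
    intro s hs hcross
    have hrest := ih (s+1) (by omega)
      (fun r c h1 h2 hc1 hc2 => hcross r c (by omega) (by omega) hc1 hc2)
    rw [List.range'_succ]
    simp only [List.flatMap_cons, lprod_append, Equiv.Perm.mul_apply]
    have e1 : s + (len+1) + Q = s + 1 + len + Q := by omega
    have e2 : s + (len+1) + K = s + 1 + len + K := by omega
    rw [e1, e2, hrest.1, hrest.2]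
    have hsplitrow := seg_split4 D (s+1) Q K n h1Q hQK hKn
    have hQ1 : seg D (s+1) Q 1 = [s + Q] := by
      rw [seg_one, if_pos (hcross (s+1) Q (by omega) (by omega) le_rfl (by omega))]
      rw [show s + 1 + Q - 1 = s + Q from by omega]
    have hK1 : seg D (s+1) K 1 = [s + K] := by
      rw [seg_one, if_pos (hcross (s+1) K (by omega) (by omega) (by omega) le_rfl)]
      rw [show s + 1 + K - 1 = s + K from by omega]
    rw [hsplitrow, hQ1, hK1]
    simp only [lprod_append, lprod_single, Equiv.Perm.mul_apply]
    have hlow1 : lprod (seg D (s+1) 1 (Q-1)) (s+1+Q) = s+1+Q :=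
      seg_fix (fun c hc1 hc2 _ => by omega) (by omega)
    have hlow2 : lprod (seg D (s+1) 1 (Q-1)) (s+1+K) = s+1+K :=
      seg_fix (fun c hc1 hc2 _ => by omega) (by omega)
    have hrun1 : lprod (seg D (s+1) (Q+1) (K-1-Q)) (s+Q) = s+Q :=
      seg_fix (fun c hc1 hc2 _ => by omega) (by omega)
    have hrun2 : lprod (seg D (s+1) (Q+1) (K-1-Q)) (s+1+K) = s+1+K :=
      seg_fix (fun c hc1 hc2 _ => by omega) (by omega)
    have hU1 : lprod (seg D (s+1) (K+1) (n-K)) (s+Q) = s+Q :=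
      seg_fix (fun c hc1 hc2 _ => by omega) (by omega)
    have hU2 : lprod (seg D (s+1) (K+1) (n-K)) (s+K) = s+K :=
      seg_fix (fun c hc1 hc2 _ => by omega) (by omega)
    constructor
    · rw [hlow1]
      rw [show (Equiv.swap (s+Q) (s+Q+1)) (s+1+Q) = s + Q from by
        rw [Equiv.swap_apply_def]; split_ifs <;> omega]
      rw [hrun1]
      rw [show (Equiv.swap (s+K) (s+K+1)) (s+Q) = s + Q from by
        rw [Equiv.swap_apply_def]; split_ifs <;> omega]
      exact hU1
    · rw [hlow2]
      rw [show (Equiv.swap (s+Q) (s+Q+1)) (s+1+K) = s+1+K from by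
        rw [Equiv.swap_apply_def]; split_ifs <;> omega]
      rw [hrun2]
      rw [show (Equiv.swap (s+K) (s+K+1)) (s+1+K) = s + K from by
        rw [Equiv.swap_apply_def]; split_ifs <;> omega]
      exact hU2


/-! ### Attainment lemmas for hIdx, kIdx, maxBumpRow -/

lemma hIdx_mem {D : PipeDream} {i j : ℕ} (hm : Movable D i j) :
    1 ≤ hIdx D i j ∧ hIdx D i j < i ∧ D (hIdx D i j, j) = false := by
  classical
  obtain ⟨-, h0, h1, h2, h3⟩ := hm
  have hne : ((Finset.Ico 1 i).filter (fun h => D (h, j) = false)).Nonempty :=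
    ⟨h0, by simp only [Finset.mem_filter, Finset.mem_Ico]; exact ⟨⟨h1, h2⟩, h3⟩⟩
  have hmem := sup_id_mem _ hne
  simp only [Finset.mem_filter, Finset.mem_Ico] at hmem
  exact ⟨hmem.1.1, hmem.1.2, hmem.2⟩

lemma hIdx_max {D : PipeDream} {i j r : ℕ} (h1 : hIdx D i j < r) (h2 : r < i) :
    D (r, j) = true := by
  classical
  cases hb : D (r, j) with
  | true => rfl
  | false =>
    exfalso
    have hmem : r ∈ (Finset.Ico 1 i).filter (fun h => D (h, j) = false) := by
      simp only [Finset.mem_filter, Finset.mem_Ico]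
      exact ⟨⟨by omega, h2⟩, hb⟩
    have hle := Finset.le_sup (f := id) hmem
    unfold hIdx at h1
    simp only [id] at hle
    omega

lemma kIdx_facts {n : ℕ} {D : PipeDream} {i j : ℕ}
    (hne : ∃ c, j+1 ≤ c ∧ c ≤ n ∧ D (i, c) = false) :
    (j+1 ≤ kIdx n D i j ∧ kIdx n D i j ≤ n ∧ D (i, kIdx n D i j) = false) ∧
    (∀ t, j+1 ≤ t → t ≤ n → D (i, t) = false → kIdx n D i j ≤ t) := by
  classical
  obtain ⟨c0, hc1, hc2, hc3⟩ := hne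
  have hne' : ((Finset.Icc (j+1) n).filter (fun k => D (i, k) = false)).Nonempty :=
    ⟨c0, by simp only [Finset.mem_filter, Finset.mem_Icc]; exact ⟨⟨hc1, hc2⟩, hc3⟩⟩
  have hk : kIdx n D i j
      = ((Finset.Icc (j+1) n).filter (fun k => D (i, k) = false)).min' hne' := by
    unfold kIdx; exact min_untop'_eq _ hne'
  constructor
  · have hmem := Finset.min'_mem _ hne'
    simp only [Finset.mem_filter, Finset.mem_Icc] at hmem
    rw [hk]; exact ⟨hmem.1.1, hmem.1.2, hmem.2⟩
  · intro t h1 h2 h3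
    rw [hk]
    exact Finset.min'_le _ t
      (by simp only [Finset.mem_filter, Finset.mem_Icc]; exact ⟨⟨h1, h2⟩, h3⟩)

lemma maxBumpRow_facts {n : ℕ} {D : PipeDream} {i j : ℕ}
    (hlt : hIdx D i j < maxBumpRow n D i j) :
    maxBumpRow n D i j < i ∧
    ∃ c, j ≤ c ∧ c ≤ kIdx n D i j ∧ D (maxBumpRow n D i j, c) = false := by
  classical
  have hne : ((Finset.Ico (hIdx D i j) i).filter
      (fun p => ∃ q ∈ Finset.Icc j (kIdx n D i j), D (p, q) = false)).Nonempty := by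
    by_contra hcon
    rw [Finset.not_nonempty_iff_eq_empty] at hcon
    unfold maxBumpRow at hlt
    rw [hcon, Finset.sup_empty] at hlt
    simp at hlt
  have hmem := sup_id_mem _ hne
  rw [Finset.mem_filter, Finset.mem_Ico] at hmem
  unfold maxBumpRow
  refine ⟨hmem.1.2, ?_⟩
  obtain ⟨q, hq, hq2⟩ := hmem.2
  rw [Finset.mem_Icc] at hq
  exact ⟨q, hq.1, hq.2, hq2⟩

lemma le_maxBumpRow {n : ℕ} {D : PipeDream} {i j r : ℕ}
    (h1 : hIdx D i j ≤ r) (h2 : r < i)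
    (h3 : ∃ c, j ≤ c ∧ c ≤ kIdx n D i j ∧ D (r, c) = false) :
    r ≤ maxBumpRow n D i j := by
  classical
  unfold maxBumpRow
  obtain ⟨c, hc1, hc2, hc3⟩ := h3
  have hmem : r ∈ (Finset.Ico (hIdx D i j) i).filter
      (fun p => ∃ q ∈ Finset.Icc j (kIdx n D i j), D (p, q) = false) := by
    rw [Finset.mem_filter, Finset.mem_Ico]
    exact ⟨⟨h1, h2⟩, c, Finset.mem_Icc.2 ⟨hc1, hc2⟩, hc3⟩
  exact Finset.le_sup (f := id) hmem

lemma maxBumpRow_max {n : ℕ} {D : PipeDream} {i j r c : ℕ}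
    (h0 : hIdx D i j ≤ r) (h1 : maxBumpRow n D i j < r) (h2 : r < i)
    (h3 : j ≤ c) (h4 : c ≤ kIdx n D i j) : D (r, c) = true := by
  cases hb : D (r, c) with
  | true => rfl
  | false =>
    exfalso
    have := le_maxBumpRow h0 h2 ⟨c, h3, h4, hb⟩
    omega

/-! ### The double-crossing rectangle contradiction -/

lemma no_double_rect (n : ℕ) (w : Equiv.Perm ℕ) (D : PipeDream) (hD : D ∈ RPD n w)
    (A I Q K : ℕ)
    (h1A : 1 ≤ A) (hAI : A < I) (hIn : I ≤ n) (h1Q : 1 ≤ Q) (hQK : Q < K) (hKn : K ≤ n)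
    (hNW : D (A, Q) = false) (hSE : D (I, K) = false)
    (hrowA : ∀ c, Q < c → c ≤ K → D (A, c) = true)
    (hrowI : ∀ c, Q ≤ c → c < K → D (I, c) = true)
    (hmid : ∀ r c, A < r → r < I → Q ≤ c → c ≤ K → D (r, c) = true) : False := by
  classical
  obtain ⟨hstair, hperm, hcount⟩ := hD
  set D' : PipeDream :=
    (fun st => if st = (A, K) then false else if st = (I, Q) then false else D st) with hD'def
  have hD'ne : ∀ r c, ¬(r = A ∧ c = K) → ¬(r = I ∧ c = Q) → D (r, c) = D' (r, c) := by
    intro r c h1 h2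
    rw [hD'def]
    simp only
    rw [if_neg (by simp only [Prod.mk.injEq]; tauto), if_neg (by simp only [Prod.mk.injEq]; tauto)]
  -- the two deleted letters
  -- row splits for D
  have hRA := seg_split4 D A Q K n h1Q hQK hKn
  have hRI := seg_split4 D I Q K n h1Q hQK hKn
  have hRA' := seg_split4 D' A Q K n h1Q hQK hKn
  have hRI' := seg_split4 D' I Q K n h1Q hQK hKn
  have hAK : D (A, K) = true := hrowA K hQK le_rfl
  have hIQ : D (I, Q) = true := hrowI Q le_rfl hQK
  have hsegAK : seg D A K 1 = [A + K - 1] := by rw [seg_one, if_pos hAK]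
  have hsegAQ : seg D A Q 1 = [] := by rw [seg_one, if_neg (by rw [hNW]; simp)]
  have hsegIK : seg D I K 1 = [] := by rw [seg_one, if_neg (by rw [hSE]; simp)]
  have hsegIQ : seg D I Q 1 = [I + Q - 1] := by rw [seg_one, if_pos hIQ]
  have hsegAK' : seg D' A K 1 = [] := by
    rw [seg_one, if_neg]; rw [hD'def]; simp
  have hsegIQ' : seg D' I Q 1 = [] := by
    rw [seg_one, if_neg]; rw [hD'def]; simp only
    rw [if_neg (by simp only [Prod.mk.injEq]; omega)]
    simp
  have hsegAQ' : seg D' A Q 1 = [] := by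
    rw [seg_one, ← hD'ne A Q (by omega) (by omega), if_neg (by rw [hNW]; simp)]
  have hsegIK' : seg D' I K 1 = [] := by
    rw [seg_one, ← hD'ne I K (by omega) (by omega), if_neg (by rw [hSE]; simp)]
  -- unchanged segments
  have hUA : seg D A (K+1) (n-K) = seg D' A (K+1) (n-K) :=
    seg_congr fun c hc1 hc2 => hD'ne A c (by omega) (by omega)
  have hrunA : seg D A (Q+1) (K-1-Q) = seg D' A (Q+1) (K-1-Q) :=
    seg_congr fun c hc1 hc2 => hD'ne A c (by omega) (by omega)
  have hlowA : seg D A 1 (Q-1) = seg D' A 1 (Q-1) :=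
    seg_congr fun c hc1 hc2 => hD'ne A c (by omega) (by omega)
  have hUI : seg D I (K+1) (n-K) = seg D' I (K+1) (n-K) :=
    seg_congr fun c hc1 hc2 => hD'ne I c (by omega) (by omega)
  have hrunI : seg D I (Q+1) (K-1-Q) = seg D' I (Q+1) (K-1-Q) :=
    seg_congr fun c hc1 hc2 => hD'ne I c (by omega) (by omega)
  have hlowI : seg D I 1 (Q-1) = seg D' I 1 (Q-1) :=
    seg_congr fun c hc1 hc2 => hD'ne I c (by omega) (by omega)
  have hotherrows : ∀ i0, i0 + 1 ≠ A → i0 + 1 ≠ I → seg D (i0+1) 1 n = seg D' (i0+1) 1 n :=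
    fun i0 hA hI => seg_congr fun c hc1 hc2 => hD'ne (i0+1) c (by tauto) (by tauto)
  -- split the rows
  have hrows : List.range n = List.range (A-1) ++ [A-1] ++ List.range' A (I-1-A) ++
      [I-1] ++ List.range' I (n-I) := by
    conv_lhs => rw [List.range_eq_range', show n = (A-1) + (1 + ((I-1-A) + (1 + (n-I)))) from by omega]
    rw [range'_split, range'_split, range'_split, range'_split]
    rw [show (0:ℕ) + (A-1) = A - 1 from by omega]
    rw [show A - 1 + 1 = A from by omega]
    rw [show A + (I-1-A) = I - 1 from by omega]
    rw [show I - 1 + 1 = I from by omega]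
    rw [← List.range_eq_range']
    simp only [List.range'_one, List.append_assoc]
  have hword : ∀ E : PipeDream, word n E =
      ((List.range (A-1)).flatMap (fun i0 => seg E (i0 + 1) 1 n)) ++ seg E A 1 n ++
      ((List.range' A (I-1-A)).flatMap (fun i0 => seg E (i0 + 1) 1 n)) ++ seg E I 1 n ++
      ((List.range' I (n-I)).flatMap (fun i0 => seg E (i0 + 1) 1 n)) := by
    intro E
    rw [word_eq, hrows]
    simp only [List.flatMap_append, List.flatMap_cons, List.flatMap_nil, List.append_nil]
    rw [show A - 1 + 1 = A from by omega, show I - 1 + 1 = I from by omega]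
  -- the common pieces
  have hF : (List.range (A-1)).flatMap (fun i0 => seg D (i0 + 1) 1 n) =
      (List.range (A-1)).flatMap (fun i0 => seg D' (i0 + 1) 1 n) := by
    apply flatMap_congr
    intro i0 hi0
    rw [List.mem_range] at hi0
    exact hotherrows i0 (by omega) (by omega)
  have hM : (List.range' A (I-1-A)).flatMap (fun i0 => seg D (i0 + 1) 1 n) =
      (List.range' A (I-1-A)).flatMap (fun i0 => seg D' (i0 + 1) 1 n) := by
    apply flatMap_congr
    intro i0 hi0
    rw [List.mem_range'_1] at hi0
    exact hotherrows i0 (by omega) (by omega)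
  have hG : (List.range' I (n-I)).flatMap (fun i0 => seg D (i0 + 1) 1 n) =
      (List.range' I (n-I)).flatMap (fun i0 => seg D' (i0 + 1) 1 n) := by
    apply flatMap_congr
    intro i0 hi0
    rw [List.mem_range'_1] at hi0
    exact hotherrows i0 (by omega) (by omega)
  -- crossCount drops by 2
  have hlen : crossCount n D = crossCount n D' + 2 := by
    show (word n D).length = (word n D').length + 2
    rw [hword D, hword D', hRA, hRI, hRA', hRI', hsegAK, hsegAQ, hsegIK, hsegIQ,
      hsegAK', hsegIQ', hsegAQ', hsegIK', hF, hM, hG, hUA, hrunA, hlowA, hUI, hrunI, hlowI]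
    simp only [List.length_append, List.length_cons, List.length_nil]
    omega
  -- the permutations agree
  have hKy : (lprod (seg D A (Q+1) (K-1-Q)) * lprod (seg D A 1 (Q-1)) *
      lprod ((List.range' A (I-1-A)).flatMap (fun i0 => seg D (i0 + 1) 1 n)) *
      lprod (seg D I (K+1) (n-K)) * lprod (seg D I (Q+1) (K-1-Q))) (I + Q - 1) = A + K - 1 ∧
      (lprod (seg D A (Q+1) (K-1-Q)) * lprod (seg D A 1 (Q-1)) *
      lprod ((List.range' A (I-1-A)).flatMap (fun i0 => seg D (i0 + 1) 1 n)) *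
      lprod (seg D I (K+1) (n-K)) * lprod (seg D I (Q+1) (K-1-Q))) (I + Q) = A + K := by
    have hrI1 : lprod (seg D I (Q+1) (K-1-Q)) (I + Q - 1) = I + Q - 1 :=
      seg_fix (fun c hc1 hc2 _ => by omega) (by omega)
    have hrI2 : lprod (seg D I (Q+1) (K-1-Q)) (I + Q) = I + K - 1 := by
      have hrun := seg_run D I (Q+1) (K-1-Q) (by omega) (by omega)
        (fun c hc1 hc2 => hrowI c (by omega) (by omega))
      have := hrun.1
      rw [show I + (Q+1) - 1 = I + Q from by omega] at this
      rw [this]; omega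
    have hUI1 : lprod (seg D I (K+1) (n-K)) (I + Q - 1) = I + Q - 1 :=
      seg_fix (fun c hc1 hc2 _ => by omega) (by omega)
    have hUI2 : lprod (seg D I (K+1) (n-K)) (I + K - 1) = I + K - 1 :=
      seg_fix (fun c hc1 hc2 _ => by omega) (by omega)
    have hmidact := mid_action n D Q K h1Q hQK hKn (I-1-A) A (by omega)
      (fun r c h1 h2 hc1 hc2 => hmid r c h1 (by omega) hc1 hc2)
    have hmid1 : lprod ((List.range' A (I-1-A)).flatMap (fun i0 => seg D (i0 + 1) 1 n))
        (I + Q - 1) = A + Q := by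
      have := hmidact.1
      rw [show A + (I-1-A) + Q = I + Q - 1 from by omega] at this
      exact this
    have hmid2 : lprod ((List.range' A (I-1-A)).flatMap (fun i0 => seg D (i0 + 1) 1 n))
        (I + K - 1) = A + K := by
      have := hmidact.2
      rw [show A + (I-1-A) + K = I + K - 1 from by omega] at this
      exact this
    have hlowA1 : lprod (seg D A 1 (Q-1)) (A + Q) = A + Q :=
      seg_fix (fun c hc1 hc2 _ => by omega) (by omega)
    have hlowA2 : lprod (seg D A 1 (Q-1)) (A + K) = A + K :=
      seg_fix (fun c hc1 hc2 _ => by omega) (by omega)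
    have hrA1 : lprod (seg D A (Q+1) (K-1-Q)) (A + Q) = A + K - 1 := by
      have hrun := seg_run D A (Q+1) (K-1-Q) (by omega) (by omega)
        (fun c hc1 hc2 => hrowA c (by omega) (by omega))
      have := hrun.1
      rw [show A + (Q+1) - 1 = A + Q from by omega] at this
      rw [this]; omega
    have hrA2 : lprod (seg D A (Q+1) (K-1-Q)) (A + K) = A + K :=
      seg_fix (fun c hc1 hc2 _ => by omega) (by omega)
    constructor
    · simp only [Equiv.Perm.mul_apply, hrI1, hUI1, hmid1, hlowA1, hrA1]
    · rw [show I + Q = I + Q - 1 + 1 from by omega]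
      simp only [Equiv.Perm.mul_apply]
      rw [show I + Q - 1 + 1 = I + Q from by omega]
      rw [hrI2, hUI2, hmid2, hlowA2, hrA2]
  -- assemble
  have hconj : Equiv.swap (A+K-1) (A+K) =
      (lprod (seg D A (Q+1) (K-1-Q)) * lprod (seg D A 1 (Q-1)) *
      lprod ((List.range' A (I-1-A)).flatMap (fun i0 => seg D (i0 + 1) 1 n)) *
      lprod (seg D I (K+1) (n-K)) * lprod (seg D I (Q+1) (K-1-Q))) *
      Equiv.swap (I+Q-1) (I+Q) *
      (lprod (seg D A (Q+1) (K-1-Q)) * lprod (seg D A 1 (Q-1)) *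
      lprod ((List.range' A (I-1-A)).flatMap (fun i0 => seg D (i0 + 1) 1 n)) *
      lprod (seg D I (K+1) (n-K)) * lprod (seg D I (Q+1) (K-1-Q)))⁻¹ := by
    have hsw := Equiv.swap_apply_apply
      (lprod (seg D A (Q+1) (K-1-Q)) * lprod (seg D A 1 (Q-1)) *
      lprod ((List.range' A (I-1-A)).flatMap (fun i0 => seg D (i0 + 1) 1 n)) *
      lprod (seg D I (K+1) (n-K)) * lprod (seg D I (Q+1) (K-1-Q))) (I+Q-1) (I+Q)
    rw [hKy.1, hKy.2] at hsw
    exact hsw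
  have grp : ∀ (P Y X : Equiv.Perm ℕ), X = P * Y * P⁻¹ → Y * Y = 1 → ∀ Z, X * (P * (Y * Z)) = P * Z := by
    intro P Y X hX hY Z
    rw [hX]
    calc P * Y * P⁻¹ * (P * (Y * Z)) = P * (Y * (P⁻¹ * (P * (Y * Z)))) := by
          simp only [mul_assoc]
      _ = P * (Y * (Y * Z)) := by rw [inv_mul_cancel_left]
      _ = P * ((Y * Y) * Z) := by simp only [mul_assoc]
      _ = P * Z := by rw [hY, one_mul]
  have key : ∀ Z : Equiv.Perm ℕ,
      Equiv.swap (A+K-1) (A+K) * (lprod (seg D A (Q+1) (K-1-Q)) * (lprod (seg D A 1 (Q-1)) *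
        (lprod ((List.range' A (I-1-A)).flatMap (fun i0 => seg D (i0 + 1) 1 n)) *
        (lprod (seg D I (K+1) (n-K)) * (lprod (seg D I (Q+1) (K-1-Q)) *
        (Equiv.swap (I+Q-1) (I+Q) * Z)))))) =
      lprod (seg D A (Q+1) (K-1-Q)) * (lprod (seg D A 1 (Q-1)) *
        (lprod ((List.range' A (I-1-A)).flatMap (fun i0 => seg D (i0 + 1) 1 n)) *
        (lprod (seg D I (K+1) (n-K)) * (lprod (seg D I (Q+1) (K-1-Q)) * Z)))) := by
    intro Z
    have hgrp := grp (lprod (seg D A (Q+1) (K-1-Q)) * lprod (seg D A 1 (Q-1)) *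
      lprod ((List.range' A (I-1-A)).flatMap (fun i0 => seg D (i0 + 1) 1 n)) *
      lprod (seg D I (K+1) (n-K)) * lprod (seg D I (Q+1) (K-1-Q)))
      (Equiv.swap (I+Q-1) (I+Q)) (Equiv.swap (A+K-1) (A+K)) hconj
      (Equiv.swap_mul_self _ _) Z
    simp only [mul_assoc] at hgrp
    exact hgrp
  have hperm' : perm n D' = perm n D := by
    show lprod (word n D') = lprod (word n D)
    rw [hword D, hword D', hRA, hRI, hRA', hRI',
      hsegAK, hsegAQ, hsegIK, hsegIQ, hsegAK', hsegIQ', hsegAQ', hsegIK', hF, hM, hG,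
      hUA, hrunA, hlowA, hUI, hrunI, hlowI]
    rw [← hUA, ← hrunA, ← hlowA, ← hUI, ← hrunI, ← hlowI, ← hF, ← hM, ← hG]
    have hXs : lprod [A + K - 1] = Equiv.swap (A+K-1) (A+K) := by
      rw [lprod_single, show A+K-1+1 = A+K from by omega]
    have hYs : lprod [I + Q - 1] = Equiv.swap (I+Q-1) (I+Q) := by
      rw [lprod_single, show I+Q-1+1 = I+Q from by omega]
    simp only [lprod_append, lprod_nil, List.append_nil, List.nil_append, mul_one, one_mul,
      hXs, hYs, mul_assoc]
    rw [key]
  have h2 : invCount w n ≤ crossCount n D' := by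
    rw [← hperm, ← hperm']
    exact invCount_lprod_le (word n D') n
  omega

end PipeDream

open PipeDream in
/-- suppose a = max_bump_row_{ij}(D) > h.  A ladder movable
(p,q) ∈ Shape_{ij}(D) with a < p < i must have q = k_{ij}(D); and a ladder
movable (i,q) with j < q < k_{ij}(D) must have q ≥ k_{aj}(D). -/
theorem stmt16 (n : ℕ) (w : Equiv.Perm ℕ) (D : PipeDream) (hD : D ∈ RPD n w)
    (i j : ℕ) (hmov : Movable D i j)
    (ha : hIdx D i j < maxBumpRow n D i j) :
    (∀ p q, (p, q) ∈ Shape n D i j → LadderMovable n D p q →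
      maxBumpRow n D i j < p → p < i → q = kIdx n D i j) ∧
    (∀ q, LadderMovable n D i q → j < q → q < kIdx n D i j →
      kIdx n D (maxBumpRow n D i j) j ≤ q) := by
  classical
  obtain ⟨hstair, hperm, hcount⟩ := hD
  have hcross := hmov.1
  obtain ⟨hi1, hj1, hijn⟩ := hstair i j hcross
  obtain ⟨hh1, hhi, hhbump⟩ := hIdx_mem hmov
  have hkwit : ∃ c, j+1 ≤ c ∧ c ≤ n ∧ D (i, c) = false := by
    refine ⟨n+2-i, by omega, by omega, ?_⟩
    cases hb : D (i, n+2-i) with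
    | false => rfl
    | true => exfalso; have := hstair _ _ hb; omega
  obtain ⟨⟨hkj, hkn, hkbump⟩, hkmin⟩ := kIdx_facts hkwit
  have hrowi : ∀ t, j+1 ≤ t → t < kIdx n D i j → D (i, t) = true := by
    intro t h1 h2
    cases hb : D (i, t) with
    | true => rfl
    | false => exfalso; have := hkmin t h1 (by omega) hb; omega
  obtain ⟨hai, qa0, hq1, hq2, hq3⟩ := maxBumpRow_facts ha
  constructor
  · intro p q hshape hlm hap hpi
    by_contra hqk'
    have hrect := (Finset.mem_filter.1 hshape).1
    simp only [Rect, Finset.mem_Icc, Prod.mk_le_mk] at hrect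
    obtain ⟨⟨hhp, hjq⟩, hpi', hqk⟩ := hrect
    have hqklt : q < kIdx n D i j := by
      rcases Nat.lt_or_ge q (kIdx n D i j) with h | h
      · exact h
      · exact absurd (le_antisymm hqk h) hqk'
    have hpmov := hlm.1
    have hpcross := hpmov.1
    obtain ⟨hp'1, hp'lt, hp'bump⟩ := hIdx_mem hpmov
    obtain ⟨-, hq1', hstairpq⟩ := hstair p q hpcross
    have hh'a : hIdx D p q ≤ maxBumpRow n D i j := by
      by_contra hcon
      push_neg at hcon
      have := le_maxBumpRow (n := n) (i := i) (j := j) (r := hIdx D p q)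
        (by omega) (by omega) ⟨q, hjq, hqk, hp'bump⟩
      omega
    have hk'wit : ∃ c, q+1 ≤ c ∧ c ≤ n ∧ D (p, c) = false := by
      refine ⟨n+2-p, by omega, by omega, ?_⟩
      cases hb : D (p, n+2-p) with
      | false => rfl
      | true => exfalso; have := hstair _ _ hb; omega
    obtain ⟨⟨hk'q, hk'n, hk'bump⟩, hk'min⟩ := kIdx_facts hk'wit
    have hkk' : kIdx n D i j < kIdx n D p q := by
      by_contra hcon
      push_neg at hcon
      have hcr := maxBumpRow_max (n := n) (D := D) (i := i) (j := j)
        (r := p) (c := kIdx n D p q) (by omega) hap hpi (by omega) hcon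
      rw [hcr] at hk'bump
      simp at hk'bump
    have hak : D (maxBumpRow n D i j, kIdx n D i j) = true := by
      have hmemr : (maxBumpRow n D i j, kIdx n D i j) ∈ Rect n D p q := by
        simp only [Rect, Finset.mem_Icc, Prod.mk_le_mk]
        exact ⟨⟨hh'a, hqk⟩, by omega, by omega⟩
      cases hb : D (maxBumpRow n D i j, kIdx n D i j) with
      | true => rfl
      | false =>
        exfalso
        rcases (hlm.2 _ _ hmemr).1 hb with h1 | h1 | h1 <;>
          (rw [Prod.mk.injEq] at h1; omega)
    have hSAne : ((Finset.Icc j (kIdx n D i j)).filter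
        (fun c => D (maxBumpRow n D i j, c) = false)).Nonempty :=
      ⟨qa0, by simp only [Finset.mem_filter, Finset.mem_Icc]; exact ⟨⟨hq1, hq2⟩, hq3⟩⟩
    have hqamem := sup_id_mem _ hSAne
    simp only [Finset.mem_filter, Finset.mem_Icc] at hqamem
    set qa := ((Finset.Icc j (kIdx n D i j)).filter
      (fun c => D (maxBumpRow n D i j, c) = false)).sup id with hqadef
    obtain ⟨⟨hqaj, hqak⟩, hqabump⟩ := hqamem
    have hqaklt : qa < kIdx n D i j := by
      rcases Nat.lt_or_ge qa (kIdx n D i j) with h | h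
      · exact h
      · have he : qa = kIdx n D i j := by omega
        rw [he, hak] at hqabump
        simp at hqabump
    have hrowAmax : ∀ c, qa < c → c ≤ kIdx n D i j → D (maxBumpRow n D i j, c) = true := by
      intro c h1 h2
      cases hb : D (maxBumpRow n D i j, c) with
      | true => rfl
      | false =>
        exfalso
        have hmem : c ∈ (Finset.Icc j (kIdx n D i j)).filter
            (fun c => D (maxBumpRow n D i j, c) = false) := by
          simp only [Finset.mem_filter, Finset.mem_Icc]
          exact ⟨⟨by omega, h2⟩, hb⟩
        have hle := Finset.le_sup (f := id) hmem
        rw [← hqadef] at hle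
        simp only [id] at hle
        omega
    exact no_double_rect n w D ⟨hstair, hperm, hcount⟩ (maxBumpRow n D i j) i qa
      (kIdx n D i j) (by omega) hai (by omega) (by omega) hqaklt (by omega)
      hqabump hkbump hrowAmax
      (fun c hc1 hc2 => by
        rcases Nat.eq_or_lt_of_le (show j ≤ c by omega) with he | hl
        · rw [← he]; exact hcross
        · exact hrowi c (by omega) hc2)
      (fun r c h1 h2 hc1 hc2 =>
        maxBumpRow_max (by omega) h1 h2 (by omega) hc2)
  · intro q hlm hjq hqkl
    obtain ⟨hq'1, hq'lt, hq'bump⟩ := hIdx_mem hlm.1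
    have hh''a : hIdx D i q ≤ maxBumpRow n D i j := by
      by_contra hcon
      push_neg at hcon
      have := le_maxBumpRow (n := n) (i := i) (j := j) (r := hIdx D i q)
        (by omega) (by omega) ⟨q, by omega, by omega, hq'bump⟩
      omega
    have hk''eq : kIdx n D i q = kIdx n D i j := by
      have hwit2 : ∃ c, q+1 ≤ c ∧ c ≤ n ∧ D (i, c) = false :=
        ⟨kIdx n D i j, by omega, by omega, hkbump⟩
      obtain ⟨⟨ha1, ha2, ha3⟩, hamin⟩ := kIdx_facts hwit2
      have h1 : kIdx n D i q ≤ kIdx n D i j := hamin _ (by omega) (by omega) hkbump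
      have h2 : ¬ (kIdx n D i q < kIdx n D i j) := by
        intro hcon
        have hcr := hrowi (kIdx n D i q) (by omega) (by omega)
        rw [hcr] at ha3
        simp at ha3
      omega
    rcases Nat.lt_or_ge qa0 q with hlt | hge
    · have hqa0nej : qa0 ≠ j := by
        intro he
        have hcr := hIdx_max (D := D) (i := i) (j := j) ha hai
        rw [he, hcr] at hq3
        simp at hq3
      exact le_trans ((kIdx_facts ⟨qa0, by omega, by omega, hq3⟩).2 qa0 (by omega)
        (by omega) hq3) (by omega)
    · have hmemr : (maxBumpRow n D i j, qa0) ∈ Rect n D i q := by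
        simp only [Rect, Finset.mem_Icc, Prod.mk_le_mk]
        exact ⟨⟨hh''a, hge⟩, by omega, by rw [hk''eq]; omega⟩
      have haq : D (maxBumpRow n D i j, q) = false := by
        rcases (hlm.2 _ _ hmemr).1 hq3 with h1 | h1 | h1 <;> rw [Prod.mk.injEq] at h1
        · rw [h1.1]; exact hq'bump
        · rw [h1.1]; exact hq'bump
        · exact absurd h1.1 (by omega)
      exact (kIdx_facts ⟨q, by omega, by omega, haq⟩).2 q (by omega) (by omega) haq
end
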